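/- arXiv:2305.07594 — 6 statements merged into one kernel-verified Lean document; each statement's English description precedes it below -/
import Mathlib

section
/- The coupling heuristic is consistent for the unit-cost refactoring actions: for any state p and any successor c of p (obtained either by adding a single intra-edge or by removing a single inter-edge), h_cou(c) ≥ h_cou(p) − 1. -/
open Finset

variable {V Mo : Type*} [Fintype V] [DecidableEq V] [Fintype Mo] [DecidableEq Mo]

/-- A valid edge set: every directed edge has distinct endpoints. -/
def ValidEdges (E : Finset (V × V)) : Prop := ∀ e ∈ E, e.1 ≠ e.2

/-- The intra-edges of a state: edges whose endpoints lie in the same module. -/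
def intraEdges (m : V → Mo) (E : Finset (V × V)) : Finset (V × V) :=
  E.filter (fun e => m e.1 = m e.2)

/-- The inter-edges between modules `M₁` and `M₂` (in either direction). -/
def interEdges (m : V → Mo) (E : Finset (V × V)) (M₁ M₂ : Mo) : Finset (V × V) :=
  E.filter (fun e => (m e.1 = M₁ ∧ m e.2 = M₂) ∨ (m e.1 = M₂ ∧ m e.2 = M₁))

lemma interEdges_symm (m : V → Mo) (E : Finset (V × V)) (M₁ M₂ : Mo) :
    interEdges m E M₁ M₂ = interEdges m E M₂ M₁ := by
  simp [interEdges, or_comm]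

/-- The coupling heuristic: the sum, over unordered pairs `{M₁, M₂}` of distinct modules,
of `max (0, |Inter_{M₁,M₂}| − 1)` (natural subtraction realizes the `max` with `0`). -/
def hCou (m : V → Mo) (E : Finset (V × V)) : ℕ :=
  ∑ q ∈ (Finset.univ : Finset (Sym2 Mo)),
    Sym2.lift ⟨fun M₁ M₂ => if M₁ = M₂ then 0 else (interEdges m E M₁ M₂).card - 1,
      fun a b => by
        by_cases h : a = b
        · simp [h]
        · dsimp only
          rw [if_neg h, if_neg (Ne.symm h), interEdges_symm]⟩ q

/-- The number of vertices assigned to module `M`. -/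
def moduleSize (m : V → Mo) (M : Mo) : ℕ := (Finset.univ.filter (fun v => m v = M)).card

/-- `E_max = Σ_M |M|(|M|−1)`, the maximum possible number of intra-edges. -/
def Emax (m : V → Mo) : ℕ :=
  ∑ M ∈ (Finset.univ : Finset Mo), moduleSize m M * (moduleSize m M - 1)

/-- The cohesion heuristic: `max (0, ⌈α·E_max⌉ − |Intra(s)|)` (realized via `Int.toNat`). -/
noncomputable def hCoh (α : ℝ) (m : V → Mo) (E : Finset (V × V)) : ℕ :=
  (⌈α * (Emax m : ℝ)⌉ - ((intraEdges m E).card : ℤ)).toNat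

/-- One unit-cost refactoring action: either add a single new intra-edge,
or remove a single inter-edge. -/
def Step (m : V → Mo) (p c : Finset (V × V)) : Prop :=
  (∃ u v : V, u ≠ v ∧ m u = m v ∧ (u, v) ∉ p ∧ c = insert (u, v) p) ∨
  (∃ u v : V, m u ≠ m v ∧ (u, v) ∈ p ∧ c = p.erase (u, v))

/-- A goal state: at most one inter-edge between any two distinct modules, and
the number of intra-edges is at least `α·E_max`. -/
def Goal (α : ℝ) (m : V → Mo) (E : Finset (V × V)) : Prop :=
  (∀ M₁ M₂ : Mo, M₁ ≠ M₂ → (interEdges m E M₁ M₂).card ≤ 1) ∧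
  α * (Emax m : ℝ) ≤ ((intraEdges m E).card : ℝ)

/-- The coupling heuristic is consistent for the unit-cost refactoring actions:
for any successor `c` of `p`, `h_cou(c) ≥ h_cou(p) − 1`. -/
theorem hCou_consistent {V Mo : Type*} [Fintype V] [DecidableEq V] [Fintype Mo] [DecidableEq Mo]
    (m : V → Mo) (p c : Finset (V × V)) (hp : ValidEdges p)
    (h : Step m p c) :
    hCou m p ≤ hCou m c + 1 := by
  rcases h with ⟨u, v, huv, hm, hnp, hc⟩ | ⟨u, v, hm, hmem, hc⟩
  · -- adding an intra-edge: interEdges unchanged for distinct modules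
    have key : hCou m p = hCou m c := by
      unfold hCou
      refine Finset.sum_congr rfl fun q _ => ?_
      induction q using Sym2.ind with
      | _ M₁ M₂ =>
        simp only [Sym2.lift_mk]
        by_cases hMM : M₁ = M₂
        · simp [hMM]
        · have : interEdges m c M₁ M₂ = interEdges m p M₁ M₂ := by
            subst hc
            unfold interEdges
            rw [Finset.filter_insert, if_neg]
            rintro (⟨h1, h2⟩ | ⟨h1, h2⟩) <;> exact hMM (by rw [← h1, ← h2, hm])
          rw [this]
    omega
  · -- removing an inter-edge
    unfold hCou
    have hle : ∀ q : Sym2 Mo,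
        Sym2.lift ⟨fun M₁ M₂ => if M₁ = M₂ then 0 else (interEdges m p M₁ M₂).card - 1,
          fun a b => by
            by_cases h : a = b
            · simp [h]
            · dsimp only
              rw [if_neg h, if_neg (Ne.symm h), interEdges_symm]⟩ q ≤
        Sym2.lift ⟨fun M₁ M₂ => if M₁ = M₂ then 0 else (interEdges m c M₁ M₂).card - 1,
          fun a b => by
            by_cases h : a = b
            · simp [h]
            · dsimp only
              rw [if_neg h, if_neg (Ne.symm h), interEdges_symm]⟩ q +
          (if q = Sym2.mk (m u) (m v) then 1 else 0) := by
      intro q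
      induction q using Sym2.ind with
      | _ M₁ M₂ =>
        simp only [Sym2.lift_mk]
        by_cases hMM : M₁ = M₂
        · simp [hMM]
        · rw [if_neg hMM, if_neg hMM]
          have hsub : interEdges m c M₁ M₂ = (interEdges m p M₁ M₂).erase (u, v) := by
            subst hc; unfold interEdges; rw [Finset.filter_erase]
          by_cases hq : Sym2.mk M₁ M₂ = Sym2.mk (m u) (m v)
          · rw [if_pos hq]
            have : (interEdges m p M₁ M₂).card ≤ (interEdges m c M₁ M₂).card + 1 := by
              rw [hsub]
              by_cases hy : (u, v) ∈ interEdges m p M₁ M₂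
              · have := Finset.card_erase_add_one hy; omega
              · rw [Finset.erase_eq_of_notMem hy]; omega
            omega
          · rw [if_neg hq]
            have hnot : (u, v) ∉ interEdges m p M₁ M₂ := by
              intro hin
              apply hq
              rcases (Finset.mem_filter.mp hin).2 with ⟨h1, h2⟩ | ⟨h1, h2⟩
              · rw [← h1, ← h2]
              · rw [← h1, ← h2, Sym2.eq_swap]
            rw [hsub, Finset.erase_eq_of_notMem hnot]; omega
    calc ∑ q ∈ (Finset.univ : Finset (Sym2 Mo)), _ ≤ _ := Finset.sum_le_sum fun q _ => hle q
      _ = hCou m c + 1 := by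
        rw [Finset.sum_add_distrib, Finset.sum_ite_eq' Finset.univ (Sym2.mk (m u) (m v))
          (fun _ => 1)]
        simp [hCou]
end

section
/- The coupling heuristic is admissible: for any state s, if there is a sequence of n unit-cost refactoring actions (each adding a single intra-edge or removing a single inter-edge) transforming s into a goal state, then h_cou(s) ≤ n. -/
open Finset

variable {V Mo : Type*} [Fintype V] [DecidableEq V] [Fintype Mo] [DecidableEq Mo]

lemma interEdges_insert_intra (m : V → Mo) (E : Finset (V × V)) {u v : V}
    (h : m u = m v) {a b : Mo} (hab : a ≠ b) :
    interEdges m (insert (u, v) E) a b = interEdges m E a b := by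
  unfold interEdges
  rw [Finset.filter_insert, if_neg]
  rintro (⟨h1, h2⟩ | ⟨h1, h2⟩)
  · exact hab (h1 ▸ h2 ▸ h)
  · exact hab (h2 ▸ h1 ▸ h).symm

lemma hCou_insert_intra (m : V → Mo) (E : Finset (V × V)) {u v : V}
    (h : m u = m v) : hCou m (insert (u, v) E) = hCou m E := by
  unfold hCou
  refine Finset.sum_congr rfl fun q _ => ?_
  induction q using Sym2.inductionOn with
  | hf a b =>
    simp only [Sym2.lift_mk]
    by_cases hab : a = b
    · simp [hab]
    · rw [if_neg hab, if_neg hab, interEdges_insert_intra m E h hab]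

lemma hCou_erase_inter (m : V → Mo) (E : Finset (V × V)) {u v : V}
    (h : m u ≠ m v) : hCou m E ≤ hCou m (E.erase (u, v)) + 1 := by
  classical
  set q₀ : Sym2 Mo := Sym2.mk (m u) (m v) with hq₀
  unfold hCou
  calc (∑ q ∈ (Finset.univ : Finset (Sym2 Mo)),
      Sym2.lift ⟨fun M₁ M₂ => if M₁ = M₂ then 0 else (interEdges m E M₁ M₂).card - 1, _⟩ q)
      ≤ ∑ q ∈ (Finset.univ : Finset (Sym2 Mo)),
        (Sym2.lift ⟨fun M₁ M₂ => if M₁ = M₂ then 0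
            else (interEdges m (E.erase (u, v)) M₁ M₂).card - 1, _⟩ q
          + if q = q₀ then 1 else 0) := by
        refine Finset.sum_le_sum fun q _ => ?_
        induction q using Sym2.inductionOn with
        | hf a b =>
          simp only [Sym2.lift_mk]
          by_cases hab : a = b
          · simp [hab]
          · rw [if_neg hab, if_neg hab]
            have hfe : interEdges m (E.erase (u, v)) a b
                = (interEdges m E a b).erase (u, v) := by
              unfold interEdges
              exact Finset.filter_erase _ _ _
            by_cases hq : Sym2.mk a b = q₀
            · rw [if_pos hq, hfe]
              have := Finset.pred_card_le_card_erase (s := interEdges m E a b)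
                (a := (u, v))
              omega
            · rw [if_neg hq, hfe, add_zero]
              have hnot : (u, v) ∉ interEdges m E a b := by
                intro hmem
                apply hq
                unfold interEdges at hmem
                rcases (Finset.mem_filter.mp hmem).2 with ⟨h1, h2⟩ | ⟨h1, h2⟩
                · rw [hq₀, ← h1, ← h2]
                · rw [hq₀, ← h1, ← h2, Sym2.eq_swap]
              rw [Finset.erase_eq_of_notMem hnot]
    _ = (∑ q ∈ (Finset.univ : Finset (Sym2 Mo)),
        Sym2.lift ⟨fun M₁ M₂ => if M₁ = M₂ then 0
          else (interEdges m (E.erase (u, v)) M₁ M₂).card - 1, _⟩ q) + 1 := by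
        rw [Finset.sum_add_distrib, Finset.sum_ite_eq' Finset.univ q₀ (fun _ => 1),
          if_pos (Finset.mem_univ q₀)]

lemma hCou_step (m : V → Mo) {p c : Finset (V × V)} (hstep : Step m p c) :
    hCou m p ≤ hCou m c + 1 := by
  rcases hstep with ⟨u, v, _, hm, _, hc⟩ | ⟨u, v, hm, _, hc⟩
  · rw [hc, hCou_insert_intra m p hm]; omega
  · rw [hc]; exact hCou_erase_inter m p hm

lemma hCou_goal_zero (α : ℝ) (m : V → Mo) (E : Finset (V × V))
    (hgoal : Goal α m E) : hCou m E = 0 := by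
  unfold hCou
  refine Finset.sum_eq_zero fun q _ => ?_
  induction q using Sym2.inductionOn with
  | hf a b =>
    simp only [Sym2.lift_mk]
    by_cases hab : a = b
    · simp [hab]
    · rw [if_neg hab]
      have := hgoal.1 a b hab
      omega

lemma hCou_chain (m : V → Mo) : ∀ n (states : Fin (n + 1) → Finset (V × V)),
    (∀ i : Fin n, Step m (states i.castSucc) (states i.succ)) →
    hCou m (states (Fin.last n)) = 0 → hCou m (states 0) ≤ n := by
  intro n
  induction n with
  | zero => intro states _ hlast; simp_all [Fin.last]
  | succ n ih =>
    intro states hstep hlast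
    have h1 : hCou m (states 1) ≤ n := by
      have := ih (fun i => states i.succ) (fun i => by
        have := hstep i.succ
        rw [Fin.succ_castSucc]; exact this) (by
        have : (Fin.last n).succ = Fin.last (n + 1) := rfl
        simpa [this] using hlast)
      simpa using this
    have h2 := hCou_step m (hstep 0)
    have e0 : (0 : Fin (n + 1)).castSucc = (0 : Fin (n + 2)) := rfl
    have e1 : (0 : Fin (n + 1)).succ = (1 : Fin (n + 2)) := rfl
    rw [e0, e1] at h2
    omega

/-- The coupling heuristic is admissible: if a sequence of `n` unit-cost refactoring
actions transforms `s` into a goal state, then `h_cou(s) ≤ n`. -/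
theorem hCou_admissible {V Mo : Type*} [Fintype V] [DecidableEq V] [Fintype Mo] [DecidableEq Mo]
    (α : ℝ) (hα0 : 0 ≤ α) (hα1 : α ≤ 1)
    (m : V → Mo) (s : Finset (V × V)) (hs : ValidEdges s) (n : ℕ)
    (states : Fin (n + 1) → Finset (V × V))
    (h0 : states 0 = s)
    (hstep : ∀ i : Fin n, Step m (states i.castSucc) (states i.succ))
    (hgoal : Goal α m (states (Fin.last n))) :
    hCou m s ≤ n := by
  rw [← h0]
  exact hCou_chain m n states hstep (hCou_goal_zero α m _ hgoal)
end

section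
/- The cohesion heuristic is consistent for the unit-cost refactoring actions: for any state p and any successor c of p (obtained either by adding a single intra-edge or by removing a single inter-edge), h_coh(c) ≥ h_coh(p) − 1. -/
open Finset

variable {V Mo : Type*} [Fintype V] [DecidableEq V] [Fintype Mo] [DecidableEq Mo]

/-- The cohesion heuristic is consistent for the unit-cost refactoring actions:
for any successor `c` of `p`, `h_coh(c) ≥ h_coh(p) − 1`. -/
theorem hCoh_consistent {V Mo : Type*} [Fintype V] [DecidableEq V] [Fintype Mo] [DecidableEq Mo]
    (α : ℝ) (hα0 : 0 ≤ α) (hα1 : α ≤ 1)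
    (m : V → Mo) (p c : Finset (V × V)) (hp : ValidEdges p)
    (h : Step m p c) :
    hCoh α m p ≤ hCoh α m c + 1 := by
  rcases h with ⟨u, v, huv, hm, hnp, hc⟩ | ⟨u, v, hm, hmem, hc⟩
  · have hi : intraEdges m c = insert (u, v) (intraEdges m p) := by
      subst hc
      simp [intraEdges, Finset.filter_insert, hm]
    have hcard : (intraEdges m c).card = (intraEdges m p).card + 1 := by
      rw [hi, Finset.card_insert_of_notMem]
      simp only [intraEdges, Finset.mem_filter]
      exact fun h => hnp h.1
    unfold hCoh
    omega
  · have hi : intraEdges m c = intraEdges m p := by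
      subst hc
      ext e
      simp only [intraEdges, Finset.mem_filter, Finset.mem_erase]
      constructor
      · rintro ⟨⟨-, h1⟩, h2⟩; exact ⟨h1, h2⟩
      · rintro ⟨h1, h2⟩
        refine ⟨⟨?_, h1⟩, h2⟩
        rintro rfl; exact hm h2
    unfold hCoh
    rw [hi]
    omega
end

section
/- The cohesion heuristic is admissible: for any state s, if there is a sequence of n unit-cost refactoring actions (each adding a single intra-edge or removing a single inter-edge) transforming s into a goal state, then h_coh(s) ≤ n. -/
open Finset

variable {V Mo : Type*} [Fintype V] [DecidableEq V] [Fintype Mo] [DecidableEq Mo]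

lemma hCoh_step_le {V Mo : Type*} [Fintype V] [DecidableEq V] [Fintype Mo] [DecidableEq Mo]
    (α : ℝ) (m : V → Mo) (p c : Finset (V × V)) (h : Step m p c) :
    hCoh α m p ≤ hCoh α m c + 1 := by
  rcases h with ⟨u, v, huv, hm, hnp, hc⟩ | ⟨u, v, hm, hp, hc⟩
  · have : intraEdges m c = insert (u, v) (intraEdges m p) := by
      subst hc
      simp [intraEdges, Finset.filter_insert, hm]
    have hcard : (intraEdges m c).card = (intraEdges m p).card + 1 := by
      rw [this, Finset.card_insert_of_notMem]
      simp [intraEdges, hnp]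
    unfold hCoh
    rw [hcard]
    omega
  · have : intraEdges m c = intraEdges m p := by
      subst hc
      unfold intraEdges
      rw [Finset.filter_erase]
      apply Finset.erase_eq_of_notMem
      exact fun h => hm ((Finset.mem_filter.mp h).2)
    unfold hCoh
    rw [this]
    omega

lemma hCoh_goal_zero {V Mo : Type*} [Fintype V] [DecidableEq V] [Fintype Mo] [DecidableEq Mo]
    (α : ℝ) (m : V → Mo) (E : Finset (V × V)) (h : Goal α m E) :
    hCoh α m E = 0 := by
  have := h.2
  have hle : ⌈α * (Emax m : ℝ)⌉ ≤ ((intraEdges m E).card : ℤ) := by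
    rw [Int.ceil_le]; exact_mod_cast this
  unfold hCoh
  omega

/-- The cohesion heuristic is admissible: if a sequence of `n` unit-cost refactoring
actions transforms `s` into a goal state, then `h_coh(s) ≤ n`. -/
theorem hCoh_admissible {V Mo : Type*} [Fintype V] [DecidableEq V] [Fintype Mo] [DecidableEq Mo]
    (α : ℝ) (hα0 : 0 ≤ α) (hα1 : α ≤ 1)
    (m : V → Mo) (s : Finset (V × V)) (hs : ValidEdges s) (n : ℕ)
    (states : Fin (n + 1) → Finset (V × V))
    (h0 : states 0 = s)
    (hstep : ∀ i : Fin n, Step m (states i.castSucc) (states i.succ))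
    (hgoal : Goal α m (states (Fin.last n))) :
    hCoh α m s ≤ n := by
  have key : ∀ k : ℕ, ∀ j : Fin (n + 1), j.val + k = n → hCoh α m (states j) ≤ k := by
    intro k
    induction k with
    | zero =>
      intro j hj
      have : j = Fin.last n := by
        ext; simpa using hj
      rw [this, hCoh_goal_zero α m _ hgoal]
    | succ k ih =>
      intro j hj
      have hjn : j.val < n := by omega
      let i : Fin n := ⟨j.val, hjn⟩
      have hjc : j = i.castSucc := by ext; rfl
      have h1 : hCoh α m (states i.castSucc) ≤ hCoh α m (states i.succ) + 1 :=
        hCoh_step_le α m _ _ (hstep i)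
      have h2 : hCoh α m (states i.succ) ≤ k := ih i.succ (by simp [Fin.val_succ, i]; omega)
      rw [hjc]
      omega
  have := key n 0 (by simp)
  rwa [h0] at this
end

section
/- The additive heuristic h_add = h_cou + h_coh is consistent for the unit-cost refactoring actions: for any state p and any successor c of p (obtained either by adding a single intra-edge or by removing a single inter-edge), h_cou(c) + h_coh(c) ≥ h_cou(p) + h_coh(p) − 1. -/
open Finset

variable {V Mo : Type*} [Fintype V] [DecidableEq V] [Fintype Mo] [DecidableEq Mo]

/-- The additive heuristic `h_add = h_cou + h_coh` is consistent for the unit-cost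
refactoring actions: for any successor `c` of `p`,
`h_cou(c) + h_coh(c) ≥ h_cou(p) + h_coh(p) − 1`. -/
theorem hAdd_consistent {V Mo : Type*} [Fintype V] [DecidableEq V] [Fintype Mo] [DecidableEq Mo]
    (α : ℝ) (hα0 : 0 ≤ α) (hα1 : α ≤ 1)
    (m : V → Mo) (p c : Finset (V × V)) (hp : ValidEdges p)
    (h : Step m p c) :
    hCou m p + hCoh α m p ≤ (hCou m c + hCoh α m c) + 1 := by
  rcases h with ⟨u, v, huv, hmuv, hnp, hc⟩ | ⟨u, v, hmuv, hmem, hc⟩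
  · -- add a new intra-edge
    have hcou : hCou m c = hCou m p := by
      unfold hCou
      refine Finset.sum_congr rfl fun q _ => ?_
      induction q using Sym2.ind with
      | _ M₁ M₂ =>
        simp only [Sym2.lift_mk]
        by_cases h12 : M₁ = M₂
        · simp [h12]
        · rw [if_neg h12, if_neg h12]
          congr 2
          unfold interEdges
          subst hc
          rw [Finset.filter_insert, if_neg]
          rintro (⟨h1, h2⟩ | ⟨h1, h2⟩)
          · exact h12 (by rw [← h1, ← h2]; exact hmuv)
          · exact h12 (by rw [← h2, ← h1]; exact hmuv.symm)
    have hintra : (intraEdges m c).card = (intraEdges m p).card + 1 := by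
      subst hc
      unfold intraEdges
      rw [Finset.filter_insert, if_pos hmuv, Finset.card_insert_of_notMem]
      exact fun hmem => hnp (Finset.mem_filter.mp hmem).1
    unfold hCoh
    rw [hcou, hintra]
    set k := ⌈α * ((Emax m : ℕ) : ℝ)⌉ with hk
    push_cast
    omega
  · -- remove an inter-edge
    have hcoh : hCoh α m c = hCoh α m p := by
      unfold hCoh intraEdges
      subst hc
      rw [Finset.filter_erase, Finset.erase_eq_of_notMem]
      intro h
      exact hmuv (Finset.mem_filter.mp h).2
    have hq0 : (Sym2.mk (m u) (m v)) ∈ (Finset.univ : Finset (Sym2 Mo)) := Finset.mem_univ _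
    have hcerase : ∀ M₁ M₂ : Mo, interEdges m c M₁ M₂ = (interEdges m p M₁ M₂).erase (u, v) := by
      intro M₁ M₂
      subst hc
      unfold interEdges
      rw [Finset.filter_erase]
    unfold hCou
    rw [← Finset.add_sum_erase _ _ hq0, ← Finset.add_sum_erase _ _ hq0]
    have hrest : ∀ q ∈ (Finset.univ : Finset (Sym2 Mo)).erase (Sym2.mk (m u) (m v)),
        (Sym2.lift ⟨fun M₁ M₂ => if M₁ = M₂ then 0 else (interEdges m p M₁ M₂).card - 1,
          fun a b => by
            by_cases h : a = b
            · simp [h]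
            · dsimp only
              rw [if_neg h, if_neg (Ne.symm h), interEdges_symm]⟩ q)
        = (Sym2.lift ⟨fun M₁ M₂ => if M₁ = M₂ then 0 else (interEdges m c M₁ M₂).card - 1,
          fun a b => by
            by_cases h : a = b
            · simp [h]
            · dsimp only
              rw [if_neg h, if_neg (Ne.symm h), interEdges_symm]⟩ q) := by
      intro q hq
      induction q using Sym2.ind with
      | _ M₁ M₂ =>
        have hne : Sym2.mk M₁ M₂ ≠ Sym2.mk (m u) (m v) := (Finset.mem_erase.mp hq).1
        simp only [Sym2.lift_mk]
        by_cases h12 : M₁ = M₂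
        · simp [h12]
        · rw [if_neg h12, if_neg h12]
          congr 2
          rw [hcerase, Finset.erase_eq_of_notMem]
          intro hmem'
          rcases (Finset.mem_filter.mp hmem').2 with ⟨h1, h2⟩ | ⟨h1, h2⟩
          · exact hne (by refine (Sym2.mk_eq_mk_iff (p := (M₁, M₂)) (q := (m u, m v))).mpr ?_; left; rw [Prod.mk.injEq]; exact ⟨h1.symm, h2.symm⟩)
          · exact hne (by refine (Sym2.mk_eq_mk_iff (p := (M₁, M₂)) (q := (m u, m v))).mpr ?_; right; simp [Prod.swap]; exact ⟨h2.symm, h1.symm⟩)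
    have hsum : ∑ q ∈ (Finset.univ : Finset (Sym2 Mo)).erase (Sym2.mk (m u) (m v)),
        (Sym2.lift ⟨fun M₁ M₂ => if M₁ = M₂ then 0 else (interEdges m p M₁ M₂).card - 1,
          fun a b => by
            by_cases h : a = b
            · simp [h]
            · dsimp only
              rw [if_neg h, if_neg (Ne.symm h), interEdges_symm]⟩ q)
        = ∑ q ∈ (Finset.univ : Finset (Sym2 Mo)).erase (Sym2.mk (m u) (m v)),
        (Sym2.lift ⟨fun M₁ M₂ => if M₁ = M₂ then 0 else (interEdges m c M₁ M₂).card - 1,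
          fun a b => by
            by_cases h : a = b
            · simp [h]
            · dsimp only
              rw [if_neg h, if_neg (Ne.symm h), interEdges_symm]⟩ q) :=
      Finset.sum_congr rfl hrest
    have hmemI : (u, v) ∈ interEdges m p (m u) (m v) :=
      Finset.mem_filter.mpr ⟨hmem, Or.inl ⟨rfl, rfl⟩⟩
    have hcard : (interEdges m c (m u) (m v)).card = (interEdges m p (m u) (m v)).card - 1 := by
      rw [hcerase, Finset.card_erase_of_mem hmemI]
    have hpos : 1 ≤ (interEdges m p (m u) (m v)).card := Finset.card_pos.mpr ⟨(u, v), hmemI⟩ 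
    simp only [Sym2.lift_mk, if_neg hmuv]
    rw [hcoh, ← hsum]
    omega
end

section
/- Along any single unit-cost refactoring action, exactly one of the two heuristics can decrease: if c is a successor of p obtained by adding an intra-edge then h_cou(c) = h_cou(p) and h_coh(c) ≥ h_coh(p) − 1, while if c is obtained by removing an inter-edge then h_coh(c) = h_coh(p) and h_cou(c) ≥ h_cou(p) − 1. -/
open Finset

variable {V Mo : Type*} [Fintype V] [DecidableEq V] [Fintype Mo] [DecidableEq Mo]

/-- Along any single unit-cost refactoring action, exactly one of the two heuristics can
decrease: adding an intra-edge leaves `h_cou` unchanged and decreases `h_coh` by at most one,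
while removing an inter-edge leaves `h_coh` unchanged and decreases `h_cou` by at most one. -/
theorem one_heuristic_decreases {V Mo : Type*} [Fintype V] [DecidableEq V]
    [Fintype Mo] [DecidableEq Mo]
    (α : ℝ) (hα0 : 0 ≤ α) (hα1 : α ≤ 1)
    (m : V → Mo) (p : Finset (V × V)) (hp : ValidEdges p) :
    (∀ u v : V, u ≠ v → m u = m v → (u, v) ∉ p →
      hCou m (insert (u, v) p) = hCou m p ∧
      hCoh α m p ≤ hCoh α m (insert (u, v) p) + 1) ∧
    (∀ u v : V, m u ≠ m v → (u, v) ∈ p →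
      hCoh α m (p.erase (u, v)) = hCoh α m p ∧
      hCou m p ≤ hCou m (p.erase (u, v)) + 1) := by
  constructor
  · intro u v huv hm hnp
    constructor
    · unfold hCou
      refine Finset.sum_congr rfl ?_
      intro q _
      induction q using Sym2.ind with
      | _ M₁ M₂ =>
        simp only [Sym2.lift_mk]
        by_cases h : M₁ = M₂
        · simp [h]
        · rw [if_neg h, if_neg h]
          congr 2
          unfold interEdges
          rw [Finset.filter_insert, if_neg]
          rintro (⟨h1, h2⟩ | ⟨h1, h2⟩)
          · exact h (h1 ▸ h2 ▸ hm)
          · exact h (h2.symm.trans (hm.symm.trans h1))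
    · have hcard : (intraEdges m (insert (u, v) p)).card = (intraEdges m p).card + 1 := by
        unfold intraEdges
        rw [Finset.filter_insert, if_pos hm, Finset.card_insert_of_notMem]
        simp only [Finset.mem_filter]
        exact fun h => hnp h.1
      unfold hCoh
      rw [hcard]
      omega
  · intro u v hm hmem
    constructor
    · have : intraEdges m (p.erase (u, v)) = intraEdges m p := by
        unfold intraEdges
        ext e
        simp only [Finset.mem_filter, Finset.mem_erase]
        constructor
        · rintro ⟨⟨_, h1⟩, h2⟩; exact ⟨h1, h2⟩
        · rintro ⟨h1, h2⟩
          refine ⟨⟨?_, h1⟩, h2⟩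
          rintro rfl
          exact hm h2
      unfold hCoh
      rw [this]
    · unfold hCou
      have key : ∀ q : Sym2 Mo,
          Sym2.lift ⟨fun M₁ M₂ => if M₁ = M₂ then 0 else (interEdges m p M₁ M₂).card - 1,
            fun a b => by
              by_cases h : a = b
              · simp [h]
              · dsimp only
                rw [if_neg h, if_neg (Ne.symm h), interEdges_symm]⟩ q ≤
          Sym2.lift ⟨fun M₁ M₂ => if M₁ = M₂ then 0 else
              (interEdges m (p.erase (u, v)) M₁ M₂).card - 1,
            fun a b => by
              by_cases h : a = b
              · simp [h]
              · dsimp only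
                rw [if_neg h, if_neg (Ne.symm h), interEdges_symm]⟩ q +
          (if q = s(m u, m v) then 1 else 0) := by
        intro q
        induction q using Sym2.ind with
        | _ M₁ M₂ =>
          simp only [Sym2.lift_mk]
          by_cases h : M₁ = M₂
          · simp [h]
          · rw [if_neg h, if_neg h]
            have herase : interEdges m (p.erase (u, v)) M₁ M₂ =
                (interEdges m p M₁ M₂).erase (u, v) := by
              unfold interEdges
              ext e
              simp only [Finset.mem_filter, Finset.mem_erase]
              tauto
            by_cases hq : s(M₁, M₂) = s(m u, m v)
            · rw [if_pos hq, herase]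
              have := Finset.pred_card_le_card_erase
                (s := interEdges m p M₁ M₂) (a := ((u, v) : V × V))
              omega
            · rw [if_neg hq, herase, Finset.erase_eq_of_notMem]
              · omega
              · intro hc
                rw [interEdges, Finset.mem_filter] at hc
                rcases hc.2 with ⟨h1, h2⟩ | ⟨h1, h2⟩
                · exact hq (by rw [← h1, ← h2])
                · exact hq (by rw [← h1, ← h2, Sym2.eq_swap])
      have h2 := Finset.sum_le_sum (fun q (_ : q ∈ (Finset.univ : Finset (Sym2 Mo))) => key q)
      rw [Finset.sum_add_distrib] at h2
      simpa using h2
end
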